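/- arXiv:2402.06129 — 5 statements merged into one kernel-verified Lean document; each statement's English description precedes it below -/
import Mathlib

section
/- For the variable-step BDF2 kernels, the discrete orthogonal convolution (DOC) kernels defined recursively by θ_0^{(n)} = 1/d_0^{(n)} and θ_{n-j}^{(n)} = -(1/d_0^{(j)}) · Σ_{i=j+1}^{n} θ_{n-i}^{(n)} d_{i-j}^{(i)} for 2 ≤ j ≤ n-1 admit the explicit formula θ_{n-j}^{(n)} = (1/d_0^{(j)}) · ∏_{i=j+1}^{n} r_i/(1+2r_i) for 2 ≤ j ≤ n, and in particular θ_{n-j}^{(n)} > 0. -/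
/-!
The kernel `d_m^{(i)}` vanishes for `m ≥ 2`, so in the recursion for `θ_{n-j}^{(n)}` only the term
`i = j + 1` survives and the recursion collapses to the two-term relation
`θ_{n-j}^{(n)} = -θ_{n-j-1}^{(n)} d_1^{(j+1)} / d_0^{(j)}`. The explicit product satisfies the same
relation because `d_1^{(j+1)} / d_0^{(j+1)} = -r_{j+1} / (1 + 2 r_{j+1})`, and it agrees with `θ` on
the diagonal, so the two coincide by downward induction on `j`.
-/

open Finset

/-- Leading BDF2 kernel coefficient d_0^{(n)} = (1+2 r_n)/(1+r_n). -/
noncomputable def d0 (r : ℕ → ℝ) (n : ℕ) : ℝ := (1 + 2 * r n) / (1 + r n)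

/-- The variable-step BDF2 kernels d_j^{(n)}. -/
noncomputable def dker (r : ℕ → ℝ) (n j : ℕ) : ℝ :=
  if j = 0 then (1 + 2 * r n) / (1 + r n)
  else if j = 1 then -(r n) / (1 + r n)
  else 0

/-- The DOC kernels (explicit formula): θ_{n-j}^{(n)} is written theta r n j. -/
noncomputable def theta (r : ℕ → ℝ) (n j : ℕ) : ℝ :=
  (1 / d0 r j) * ∏ i ∈ Finset.Icc (j + 1) n, r i / (1 + 2 * r i)

/-- Discrete time-difference quotient ∂_τ v^j = (v^j - v^{j-1})/τ_j. -/
noncomputable def dtau (τ : ℕ → ℝ) (v : ℕ → ℝ) (j : ℕ) : ℝ := (v j - v (j - 1)) / τ j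

/-- The variable-step BDF2 operator D_2 v^n = ∑_{j=1}^n d_{n-j}^{(n)} ∂_τ v^j. -/
noncomputable def D2 (r τ : ℕ → ℝ) (v : ℕ → ℝ) (n : ℕ) : ℝ :=
  ∑ j ∈ Finset.Icc 1 n, dker r n (n - j) * dtau τ v j

lemma dker_eq_zero_of_two_le (r : ℕ → ℝ) (n : ℕ) {m : ℕ} (hm : 2 ≤ m) : dker r n m = 0 := by
  simp [dker, show m ≠ 0 by omega, show m ≠ 1 by omega]

lemma sum_Icc_mul_dker_eq (r f : ℕ → ℝ) {n j : ℕ} (hjn : j < n) :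
    ∑ i ∈ Icc (j + 1) n, f i * dker r i (i - j) = f (j + 1) * dker r (j + 1) 1 := by
  rw [sum_eq_single_of_mem (j + 1) (mem_Icc.mpr ⟨le_rfl, hjn⟩), Nat.add_sub_cancel_left]
  intro i hi hne
  rw [dker_eq_zero_of_two_le r i (by grind), mul_zero]

lemma theta_eq_neg_mul_theta_succ (r : ℕ → ℝ) {n j : ℕ} (hjn : j < n) (hr : 1 + r (j + 1) ≠ 0) :
    theta r n j = -(1 / d0 r j) * (theta r n (j + 1) * dker r (j + 1) 1) := by
  rw [theta, theta, ← mul_prod_Ioc_eq_prod_Icc (by omega), ← Icc_add_one_left_eq_Ioc]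
  simp only [d0, dker, one_ne_zero, if_false, if_true]
  field_simp

lemma theta_pos (r : ℕ → ℝ) {n j : ℕ} (hr : ∀ i, j ≤ i → i ≤ n → 0 < r i) (hjn : j ≤ n) :
    0 < theta r n j := by
  have hrj := hr j le_rfl hjn
  refine mul_pos (by unfold d0; positivity) (prod_pos fun i hi => ?_)
  have hri := hr i (by grind) (mem_Icc.mp hi).2
  positivity

lemma eq_theta_of_recursion (r : ℕ → ℝ) (θ : ℕ → ℕ → ℝ) {n : ℕ}
    (hr : ∀ k, 2 ≤ k → 0 < r k) (hdiag : θ n n = 1 / d0 r n)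
    (hrec : ∀ j, 2 ≤ j → j < n →
      θ n j = -(1 / d0 r j) * ∑ i ∈ Icc (j + 1) n, θ n i * dker r i (i - j))
    {j : ℕ} (hj : 2 ≤ j) (hjn : j ≤ n) : θ n j = theta r n j := by
  induction hjn using Nat.decreasingInduction with
  | self => simp [hdiag, theta]
  | of_succ k hkn ih =>
    have hr' : 1 + r (k + 1) ≠ 0 := by linarith [hr (k + 1) (by omega)]
    rw [hrec k hj hkn, sum_Icc_mul_dker_eq r _ hkn, ih (by omega),
      theta_eq_neg_mul_theta_succ r hkn hr']

/-- the recursively defined DOC kernels of the BDF2 kernels admit the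
explicit product formula, and are positive. -/
theorem stmt_0 (r : ℕ → ℝ) (θ : ℕ → ℕ → ℝ)
    (hr : ∀ k, 2 ≤ k → 0 < r k)
    (hdiag : ∀ n, 2 ≤ n → θ n n = 1 / d0 r n)
    (hrec : ∀ n j, 2 ≤ j → j ≤ n - 1 →
      θ n j = -(1 / d0 r j) * ∑ i ∈ Finset.Icc (j + 1) n, θ n i * dker r i (i - j)) :
    ∀ n j, 2 ≤ j → j ≤ n →
      θ n j = (1 / d0 r j) * ∏ i ∈ Finset.Icc (j + 1) n, r i / (1 + 2 * r i) ∧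
      0 < θ n j := by
  intro n j hj hjn
  have hθ : θ n j = theta r n j :=
    eq_theta_of_recursion r θ hr (hdiag n (by omega))
      (fun k hk hkn => hrec n k hk (by omega)) hj hjn
  exact ⟨hθ, hθ ▸ theta_pos r (fun i hi _ => hr i (by omega)) hjn⟩
end

section
/- The DOC kernels θ_{n-j}^{(n)} = (1/d_0^{(j)}) · ∏_{i=j+1}^{n} r_i/(1+2r_i) satisfy Σ_{j=2}^{n} θ_{n-j}^{(n)} = 1 - ∏_{i=2}^{n} r_i/(1+2r_i), and hence Σ_{j=2}^{n} θ_{n-j}^{(n)} < 1 for every n ≥ 2. -/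
/-!
With q_i = r_i/(1+2r_i) one has 1/d_0^{(j)} = (1+r_j)/(1+2r_j) = 1 - q_j, so
θ_{n-j}^{(n)} = (1 - q_j) ∏_{i>j} q_i = ∏_{i>j} q_i - ∏_{i≥j} q_i and the sum telescopes
to 1 - ∏_{i=2}^n q_i, which is < 1 because every q_i is positive.
-/

open Finset

theorem Finset.sum_one_sub_mul_prod_Icc_eq_one_sub_prod {R : Type*} [CommRing R]
    (f : ℕ → R) {m n : ℕ} (hmn : m ≤ n) :
    ∑ j ∈ Icc m n, (1 - f j) * ∏ i ∈ Icc (j + 1) n, f i = 1 - ∏ i ∈ Icc m n, f i := by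
  induction n, hmn using Nat.le_induction with
  | base => simp
  | succ n hmn ih =>
    have hprod (j : ℕ) (hj : j ∈ Icc m n) :
        (1 - f j) * ∏ i ∈ Icc (j + 1) (n + 1), f i
          = (1 - f j) * (∏ i ∈ Icc (j + 1) n, f i) * f (n + 1) := by
      rw [prod_Icc_succ_top (by grind), mul_assoc]
    rw [sum_Icc_succ_top (by omega), sum_congr rfl hprod, ← sum_mul, ih,
      Icc_eq_empty_of_lt (lt_add_one _), prod_empty, prod_Icc_succ_top (by omega)]
    ring

lemma one_div_d0 (r : ℕ → ℝ) {j : ℕ} (hj : 1 + 2 * r j ≠ 0) :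
    1 / d0 r j = 1 - r j / (1 + 2 * r j) := by
  rw [d0, one_div_div, eq_sub_iff_add_eq, ← add_div, div_eq_one_iff_eq hj]
  ring

/-- sum of the DOC kernels. -/
theorem stmt_1 (r : ℕ → ℝ) (hr : ∀ k, 2 ≤ k → 0 < r k) :
    ∀ n, 2 ≤ n →
      (∑ j ∈ Finset.Icc 2 n, theta r n j
        = 1 - ∏ i ∈ Finset.Icc 2 n, r i / (1 + 2 * r i)) ∧
      (∑ j ∈ Finset.Icc 2 n, theta r n j) < 1 := by
  intro n hn
  have hq_pos (i : ℕ) (hi : i ∈ Icc 2 n) : 0 < r i / (1 + 2 * r i) := by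
    have := hr i (mem_Icc.mp hi).1
    positivity
  have hsum : ∑ j ∈ Icc 2 n, theta r n j = 1 - ∏ i ∈ Icc 2 n, r i / (1 + 2 * r i) := by
    rw [← sum_one_sub_mul_prod_Icc_eq_one_sub_prod _ hn]
    refine sum_congr rfl fun j hj ↦ ?_
    have := hr j (mem_Icc.mp hj).1
    rw [theta, one_div_d0 r (by positivity)]
  exact ⟨hsum, hsum ▸ sub_lt_self 1 (prod_pos hq_pos)⟩
end

section
/- The DOC kernels satisfy the reverse orthogonality identity Σ_{i=j}^{n} d_{n-i}^{(n)} θ_{i-j}^{(i)} = δ_{nj} for all 2 ≤ j ≤ n. -/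
open Finset

/-! For `n = j` the sum is the single term `d_0^{(j)} θ_0^{(j)} = 1`. For `n > j` only
`i = n - 1, n` contribute, since `d_k^{(n)} = 0` for `k ≥ 2`; the product formula gives
`θ^{(n)} = θ^{(n-1)} r_n / (1 + 2 r_n)`, and `d_0^{(n)} r_n / (1 + 2 r_n) = -d_1^{(n)}`. -/

section Kernels

variable (r : ℕ → ℝ)

lemma dker_zero (n : ℕ) : dker r n 0 = d0 r n := rfl

lemma dker_one (n : ℕ) : dker r n 1 = -r n / (1 + r n) := rfl

lemma dker_of_two_le {n k : ℕ} (hk : 2 ≤ k) : dker r n k = 0 := by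
  simp only [dker, if_neg (show k ≠ 0 by omega), if_neg (show k ≠ 1 by omega)]

lemma d0_pos {n : ℕ} (hn : 0 < r n) : 0 < d0 r n := by
  unfold d0
  positivity

lemma theta_self (j : ℕ) : theta r j j = 1 / d0 r j := by
  simp [theta]

lemma theta_succ {m j : ℕ} (hjm : j ≤ m) :
    theta r (m + 1) j = theta r m j * (r (m + 1) / (1 + 2 * r (m + 1))) := by
  simp only [theta, prod_Icc_succ_top (show j + 1 ≤ m + 1 by omega), mul_assoc]

lemma sum_dker_mul_succ (f : ℕ → ℝ) {m j : ℕ} (hjm : j ≤ m) :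
    ∑ i ∈ Icc j (m + 1), dker r (m + 1) (m + 1 - i) * f i
      = d0 r (m + 1) * f (m + 1) + dker r (m + 1) 1 * f m := by
  rw [sum_Icc_succ_top (by omega), Nat.sub_self, dker_zero, add_comm,
    sum_eq_single_of_mem m (mem_Icc.mpr ⟨hjm, le_rfl⟩)]
  · rw [Nat.add_sub_cancel_left]
  · intro i hi hne
    rw [dker_of_two_le r (by have := (mem_Icc.mp hi).2; omega), zero_mul]

lemma d0_mul_ratio_add_dker_one {n : ℕ} (hn : 1 + 2 * r n ≠ 0) :
    d0 r n * (r n / (1 + 2 * r n)) + dker r n 1 = 0 := by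
  rw [d0, dker_one, div_mul_div_comm, mul_comm (1 + 2 * r n), ← div_mul_div_comm,
    div_self hn, mul_one, neg_div, add_neg_cancel]

end Kernels

/-- the reverse orthogonality identity of the DOC kernels. -/
theorem stmt_3 (r : ℕ → ℝ) (hr : ∀ k, 2 ≤ k → 0 < r k) :
    ∀ n j, 2 ≤ j → j ≤ n →
      ∑ i ∈ Finset.Icc j n, dker r n (n - i) * theta r i j
        = if n = j then (1 : ℝ) else 0 := by
  intro n j hj hjn
  rcases hjn.eq_or_lt with rfl | hlt
  · rw [Icc_self, sum_singleton, Nat.sub_self, dker_zero, theta_self, if_pos rfl,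
      mul_one_div_cancel (d0_pos r (hr j hj)).ne']
  · obtain ⟨m, rfl⟩ := Nat.exists_eq_add_of_lt hlt
    have hrm : 0 < r (j + m + 1) := hr _ (by omega)
    rw [if_neg (by omega), sum_dker_mul_succ r _ (by omega), theta_succ r (by omega),
      mul_left_comm, mul_comm (dker r _ 1), ← mul_add,
      d0_mul_ratio_add_dker_one r (by positivity), mul_zero]
end

section
/- With notation as before, σ_4^n := Σ_{i=2}^{n} θ_{n-i}^{(n)} σ_3^i equals ∏_{ℓ=2}^{n} r_ℓ/(1+2r_ℓ) · Σ_{k=2}^{n} Σ_{i=k}^{n} 1/(d_0^{(i)} d_0^{(k)}), and satisfies σ_4^n ≤ 2^{-n} n(n-1) for every n ≥ 2. -/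
open Finset

/-! The kernels `θ` telescope against the partial products
`σ₂ᵏ = ∏_{l=2}^k r_l/(1+2r_l)`: `θ_{i-k}^{(i)} σ₂ᵏ = σ₂ⁱ / d₀^{(k)}`. Applying this twice turns
every term of `σ₄ⁿ` into `σ₂ⁿ / (d₀^{(i)} d₀^{(k)})`, which gives the identity after exchanging the
two sums. For the bound, `d₀ ≥ 1` and `r/(1+2r) ≤ 1/2` make each of the `n(n-1)/2` terms at most
`2^{1-n}`. -/

theorem Finset.prod_Icc_mul_prod_Icc {M : Type*} [CommMonoid M] (f : ℕ → M) {a k i : ℕ}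
    (hak : a ≤ k + 1) (hki : k ≤ i) :
    (∏ l ∈ Icc a k, f l) * ∏ l ∈ Icc (k + 1) i, f l = ∏ l ∈ Icc a i, f l := by
  simpa only [Ico_add_one_right_eq_Icc] using
    prod_Ico_consecutive f hak (by omega : k + 1 ≤ i + 1)

theorem Finset.sum_Icc_sum_Icc_comm {M : Type*} [AddCommMonoid M] (a b : ℕ) (f : ℕ → ℕ → M) :
    ∑ i ∈ Icc a b, ∑ j ∈ Icc i b, f i j = ∑ j ∈ Icc a b, ∑ i ∈ Icc a j, f i j := by
  simpa only [Ico_add_one_right_eq_Icc] using sum_Ico_Ico_comm a (b + 1) f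

theorem sum_Icc_two_cast_sub_one (n : ℕ) :
    ∑ i ∈ Icc 2 n, ((i : ℝ) - 1) = n * (n - 1) / 2 := by
  induction n with
  | zero => simp
  | succ m ih =>
    rcases Nat.eq_zero_or_pos m with rfl | hm
    · simp
    rw [sum_Icc_succ_top (by omega), ih]
    push_cast
    ring

section Kernels

variable (r : ℕ → ℝ)

theorem one_le_d0 {i : ℕ} (hi : 0 ≤ r i) : 1 ≤ d0 r i := by
  rw [d0, le_div_iff₀ (by linarith)]
  linarith

theorem one_div_d0_mul_d0_le_one {i k : ℕ} (hi : 0 ≤ r i) (hk : 0 ≤ r k) :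
    1 / (d0 r i * d0 r k) ≤ 1 := by
  have h := one_le_mul_of_one_le_of_one_le (one_le_d0 r hi) (one_le_d0 r hk)
  exact div_le_one_of_le₀ h (by linarith)

theorem theta_mul_prod_Icc_two {k i : ℕ} (hk : 1 ≤ k) (hki : k ≤ i) :
    theta r i k * ∏ l ∈ Icc 2 k, r l / (1 + 2 * r l)
      = (1 / d0 r k) * ∏ l ∈ Icc 2 i, r l / (1 + 2 * r l) := by
  rw [theta, ← prod_Icc_mul_prod_Icc _ (by omega : 2 ≤ k + 1) hki]
  ring

theorem sum_theta_mul_sum_theta_mul_prod (n : ℕ) :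
    ∑ i ∈ Icc 2 n, theta r n i *
        ∑ k ∈ Icc 2 i, theta r i k * ∏ l ∈ Icc 2 k, r l / (1 + 2 * r l)
      = (∏ l ∈ Icc 2 n, r l / (1 + 2 * r l)) *
          ∑ i ∈ Icc 2 n, ∑ k ∈ Icc 2 i, 1 / (d0 r i * d0 r k) := by
  simp only [mul_sum]
  refine sum_congr rfl fun i hi ↦ sum_congr rfl fun k hk ↦ ?_
  rw [mem_Icc] at hi hk
  rw [theta_mul_prod_Icc_two r (by omega) hk.2, mul_left_comm,
    theta_mul_prod_Icc_two r (by omega) hi.2]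
  ring

theorem prod_Icc_two_le_half_pow (hr : ∀ l, 2 ≤ l → 0 ≤ r l) (n : ℕ) :
    ∏ l ∈ Icc 2 n, r l / (1 + 2 * r l) ≤ (1 / 2) ^ (n - 1) := by
  calc ∏ l ∈ Icc 2 n, r l / (1 + 2 * r l)
      ≤ ∏ l ∈ Icc 2 n, (1 / 2 : ℝ) := by
        refine prod_le_prod (fun l hl ↦ ?_) fun l hl ↦ ?_ <;> have := hr l (mem_Icc.1 hl).1
        · positivity
        · rw [div_le_div_iff₀ (by linarith) two_pos]
          linarith
    _ = (1 / 2) ^ (n - 1) := by rw [prod_const, Nat.card_Icc]; rfl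

theorem sum_Icc_sum_Icc_one_div_d0_mul_d0_le (hr : ∀ l, 2 ≤ l → 0 ≤ r l) (n : ℕ) :
    ∑ i ∈ Icc 2 n, ∑ k ∈ Icc 2 i, 1 / (d0 r i * d0 r k) ≤ n * (n - 1) / 2 := by
  calc ∑ i ∈ Icc 2 n, ∑ k ∈ Icc 2 i, 1 / (d0 r i * d0 r k)
      ≤ ∑ i ∈ Icc 2 n, ((i : ℝ) - 1) := by
        refine sum_le_sum fun i hi ↦ ?_
        rw [mem_Icc] at hi
        calc ∑ k ∈ Icc 2 i, 1 / (d0 r i * d0 r k)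
            ≤ ∑ k ∈ Icc 2 i, (1 : ℝ) := sum_le_sum fun k hk ↦
              one_div_d0_mul_d0_le_one r (hr i hi.1) (hr k (mem_Icc.1 hk).1)
          _ = i - 1 := by
            rw [sum_const, Nat.card_Icc, nsmul_one, Nat.cast_sub (by omega)]
            push_cast
            ring
    _ = n * (n - 1) / 2 := sum_Icc_two_cast_sub_one n

end Kernels

/-- σ_4^n equals the product-times-double-sum and is bounded by 2^(-n) n(n-1). -/
theorem stmt_6 (r : ℕ → ℝ) (hr : ∀ k, 2 ≤ k → 0 < r k) :
    ∀ n, 2 ≤ n →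
      (∑ i ∈ Finset.Icc 2 n, theta r n i *
          ∑ k ∈ Finset.Icc 2 i, theta r i k * ∏ l ∈ Finset.Icc 2 k, r l / (1 + 2 * r l))
        = (∏ l ∈ Finset.Icc 2 n, r l / (1 + 2 * r l)) *
            ∑ k ∈ Finset.Icc 2 n, ∑ i ∈ Finset.Icc k n, 1 / (d0 r i * d0 r k) ∧
      (∑ i ∈ Finset.Icc 2 n, theta r n i *
          ∑ k ∈ Finset.Icc 2 i, theta r i k * ∏ l ∈ Finset.Icc 2 k, r l / (1 + 2 * r l))
        ≤ (2 : ℝ) ^ (-(n : ℤ)) * (n : ℝ) * ((n : ℝ) - 1) := by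
  intro n hn
  have hr' : ∀ l, 2 ≤ l → 0 ≤ r l := fun l hl ↦ (hr l hl).le
  rw [sum_theta_mul_sum_theta_mul_prod]
  refine ⟨by rw [sum_Icc_sum_Icc_comm 2 n fun k i ↦ 1 / (d0 r i * d0 r k)], ?_⟩
  have hn' : (2 : ℝ) ≤ n := by exact_mod_cast hn
  calc (∏ l ∈ Icc 2 n, r l / (1 + 2 * r l)) *
        ∑ i ∈ Icc 2 n, ∑ k ∈ Icc 2 i, 1 / (d0 r i * d0 r k)
      ≤ (1 / 2) ^ (n - 1) * (n * (n - 1) / 2) :=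
        mul_le_mul_of_nonneg (prod_Icc_two_le_half_pow r hr' n)
          (sum_Icc_sum_Icc_one_div_d0_mul_d0_le r hr' n)
          (prod_nonneg fun l hl ↦ by have := hr' l (mem_Icc.1 hl).1; positivity)
          (by nlinarith)
    _ = 2 ^ (-(n : ℤ)) * n * (n - 1) := by
      obtain ⟨m, rfl⟩ : ∃ m, n = m + 1 := ⟨n - 1, by omega⟩
      rw [zpow_neg, zpow_natCast, Nat.add_sub_cancel, pow_succ, one_div_pow]
      field_simp
end

section
/- Let f : ℝ → ℝ be Lipschitz with constant L_f and let the perturbed BDF2 error equation hold: D_2 ṽ^n = f(v̄^n) − f(v^n) + ε^n for 2 ≤ n ≤ N, where ṽ^n = v̄^n − v^n and D_2 is the variable-step BDF2 operator. If the maximum step size τ ≤ 1/(4 L_f), then |ṽ^n| ≤ 4 exp(4 L_f t_{n-1}) ( |ṽ^1| + τ |∂_τ ṽ^1| + t_n · max_{2≤i≤n} |ε^i| ) for 2 ≤ n ≤ N, with stability constant independent of the step ratios r_k. -/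
open Finset

/-!
With `a_k = |∂_τ ṽ^k|`, the BDF2 equation `(1 + 2r_k) ∂_τ ṽ^k = r_k ∂_τ ṽ^{k-1} + (1 + r_k) D_2 ṽ^k`
gives `a_k ≤ a_{k-1} / 2 + |D_2 ṽ^k|` whatever the step ratio `r_k > 0`, and `|ṽ^k| ≤ |ṽ^{k-1}| + τ_k a_k`.
Both are absorbed by the energy `Φ_k = |ṽ^k| + c_k a_k`, whose weights `c_k = ∑_{j=k+1}^n τ_j / 2^{j-k}`
satisfy `2 c_{k-1} = τ_k + c_k`, `c_n = 0` and `c_k ≤ τ`: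
`Φ_k ≤ Φ_{k-1} + 2 c_{k-1} (L_f Φ_k + |ε^k|)`. As `4 L_f c_{k-1} ≤ 1`, each step multiplies by at most
`(1 - 2 L_f c_{k-1})⁻¹ ≤ 4 ^ (2 L_f c_{k-1})`, and telescoping gives `∑_{k<n} c_k ≤ t_n - t_1`.
Of `4 ^ (2 L_f (t_n - t_1))`, the part `4 ^ (2 L_f τ_n) ≤ 2` of the last step goes into the constant and
the rest is at most `exp (4 L_f t_{n-1})`.
-/

open Real

theorem le_mul_exp_sum_of_le_add_mul_exp {Φ b G : ℕ → ℝ} {m n : ℕ} (hmn : m ≤ n)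
    (hb : ∀ k ∈ Ico m n, 0 ≤ b k) (hG : ∀ k ∈ Ico m n, 0 ≤ G k)
    (h : ∀ k ∈ Ico m n, Φ (k + 1) ≤ (Φ k + b k) * exp (G k)) :
    Φ n ≤ (Φ m + ∑ k ∈ Ico m n, b k) * exp (∑ k ∈ Ico m n, G k) := by
  induction n, hmn using Nat.le_induction with
  | base => simp
  | succ n hmn ih =>
    have hsub : Ico m n ⊆ Ico m (n + 1) := Ico_subset_Ico_right n.le_succ
    have hn : n ∈ Ico m (n + 1) := by simp [hmn]
    have hΦn :=
      ih (fun k hk => hb k (hsub hk)) (fun k hk => hG k (hsub hk)) (fun k hk => h k (hsub hk))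
    have hbn : b n ≤ b n * exp (∑ k ∈ Ico m n, G k) :=
      le_mul_of_one_le_right (hb n hn) (one_le_exp (sum_nonneg fun k hk => hG k (hsub hk)))
    rw [sum_Ico_succ_top hmn, sum_Ico_succ_top hmn, exp_add]
    calc Φ (n + 1) ≤ (Φ n + b n) * exp (G n) := h n hn
      _ ≤ ((Φ m + ∑ k ∈ Ico m n, b k) * exp (∑ k ∈ Ico m n, G k) +
            b n * exp (∑ k ∈ Ico m n, G k)) * exp (G n) := by gcongr
      _ = _ := by ring

lemma le_mul_exp_of_one_sub_mul_le {C y z : ℝ} (hC0 : 0 ≤ C) (hC1 : C ≤ 1 / 2) (hz : 0 ≤ z)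
    (h : (1 - C) * y ≤ z) : y ≤ z * exp (2 * log 2 * C) := by
  -- `exp (-(2 log 2) C)` is convex in `C` and agrees with `1 - C` at `C = 0` and `C = 1/2`
  have hchord : exp (-(2 * log 2 * C)) ≤ 1 - C := by
    have := convexOn_exp.2 (Set.mem_univ (-log 2)) (Set.mem_univ 0)
      (by linarith : 0 ≤ 2 * C) (by linarith : 0 ≤ 1 - 2 * C) (by ring)
    simp only [smul_eq_mul, mul_zero, add_zero, exp_zero, exp_neg, exp_log two_pos] at this
    calc exp (-(2 * log 2 * C)) = exp (2 * C * -log 2) := by ring_nf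
      _ ≤ 2 * C * 2⁻¹ + (1 - 2 * C) * 1 := this
      _ = 1 - C := by ring
  have hinv : (1 - C)⁻¹ ≤ exp (2 * log 2 * C) := by
    rwa [inv_le_comm₀ (by linarith) (exp_pos _), ← exp_neg]
  calc y ≤ z * (1 - C)⁻¹ := by rw [← div_eq_mul_inv, le_div_iff₀ (by linarith)]; linarith
    _ ≤ z * exp (2 * log 2 * C) := by gcongr

lemma D2_eq_of_two_le {r τ v : ℕ → ℝ} {k : ℕ} (hk : 2 ≤ k) :
    D2 r τ v k = (1 + 2 * r k) / (1 + r k) * dtau τ v k - r k / (1 + r k) * dtau τ v (k - 1) := by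
  obtain ⟨m, rfl⟩ : ∃ m, k = m + 2 := ⟨k - 2, by omega⟩
  have hvanish : ∑ j ∈ Icc 1 m, dker r (m + 2) (m + 2 - j) * dtau τ v j = 0 :=
    sum_eq_zero fun j hj => by
      have : m + 2 - j ≠ 0 ∧ m + 2 - j ≠ 1 := by grind
      simp [dker, this]
  rw [D2, sum_Icc_succ_top (by omega), sum_Icc_succ_top (by omega), hvanish]
  simp only [show m + 2 - (m + 1) = 1 by omega, Nat.sub_self, show m + 2 - 1 = m + 1 by omega]
  simp [dker]
  ring

lemma abs_dtau_le_half_add_abs_D2 {r τ v : ℕ → ℝ} {k : ℕ} (hk : 2 ≤ k) (hr : 0 < r k) :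
    |dtau τ v k| ≤ |dtau τ v (k - 1)| / 2 + |D2 r τ v k| := by
  have hrec : (1 + 2 * r k) * dtau τ v k = r k * dtau τ v (k - 1) + (1 + r k) * D2 r τ v k := by
    rw [D2_eq_of_two_le hk]
    field_simp
    ring
  have hbound : (1 + 2 * r k) * |dtau τ v k| ≤
      r k * |dtau τ v (k - 1)| + (1 + r k) * |D2 r τ v k| := by
    calc (1 + 2 * r k) * |dtau τ v k| = |(1 + 2 * r k) * dtau τ v k| := by
          rw [abs_mul, abs_of_pos (a := 1 + 2 * r k) (by linarith)]
      _ ≤ |r k * dtau τ v (k - 1)| + |(1 + r k) * D2 r τ v k| := hrec ▸ abs_add_le _ _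
      _ = _ := by rw [abs_mul, abs_mul, abs_of_pos hr, abs_of_pos (a := 1 + r k) (by linarith)]
  nlinarith [abs_nonneg (dtau τ v k), abs_nonneg (dtau τ v (k - 1)), abs_nonneg (D2 r τ v k)]

lemma abs_le_abs_add_mul_abs_dtau {τ v : ℕ → ℝ} {k : ℕ} (hτ : 0 < τ k) :
    |v k| ≤ |v (k - 1)| + τ k * |dtau τ v k| := by
  have hv : v k = v (k - 1) + τ k * dtau τ v k := by
    rw [dtau]; field_simp; ring
  calc |v k| = |v (k - 1) + τ k * dtau τ v k| := by rw [← hv]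
    _ ≤ |v (k - 1)| + |τ k * dtau τ v k| := abs_add_le _ _
    _ = _ := by rw [abs_mul, abs_of_pos hτ]

noncomputable def bdf2Weight (τ : ℕ → ℝ) (n k : ℕ) : ℝ := ∑ j ∈ Ioc k n, τ j / 2 ^ (j - k)

section bdf2Weight

variable (τ : ℕ → ℝ) {n : ℕ}

@[simp]
lemma bdf2Weight_self : bdf2Weight τ n n = 0 := by simp [bdf2Weight]

lemma two_mul_bdf2Weight {k : ℕ} (hk : k < n) :
    2 * bdf2Weight τ n k = τ (k + 1) + bdf2Weight τ n (k + 1) := by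
  rw [bdf2Weight, bdf2Weight, ← insert_Ioc_add_one_left_eq_Ioc hk, sum_insert (by simp), mul_add,
    mul_sum, Nat.add_sub_cancel_left, pow_one, mul_div_cancel₀ _ two_ne_zero]
  congr 1
  refine sum_congr rfl fun j hj => ?_
  rw [show j - k = j - (k + 1) + 1 by grind, pow_succ]
  field_simp

lemma bdf2Weight_nonneg {k : ℕ} (hτ : ∀ j ∈ Ioc k n, 0 ≤ τ j) : 0 ≤ bdf2Weight τ n k :=
  sum_nonneg fun j hj => div_nonneg (hτ j hj) (by positivity)

lemma bdf2Weight_le {τm : ℝ} (hτm : 0 ≤ τm) {k : ℕ} (hk : k ≤ n)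
    (hτ : ∀ j ∈ Ioc k n, τ j ≤ τm) : bdf2Weight τ n k ≤ τm := by
  induction hk using Nat.decreasingInduction with
  | self => simpa using hτm
  | of_succ k hk ih =>
    have hrec := two_mul_bdf2Weight τ hk
    have hnext := ih fun j hj => hτ j (Ioc_subset_Ioc_left k.le_succ hj)
    have hτk := hτ (k + 1) (by simp; omega)
    linarith

lemma sum_Ico_bdf2Weight_add {a m : ℕ} (ham : a ≤ m) (hmn : m ≤ n) :
    ∑ k ∈ Ico a m, bdf2Weight τ n k + bdf2Weight τ n a =
      ∑ k ∈ Ioc a m, τ k + bdf2Weight τ n m := by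
  induction m, ham using Nat.le_induction with
  | base => simp
  | succ m ham ih =>
    rw [sum_Ico_succ_top ham, sum_Ioc_succ_top ham]
    have := two_mul_bdf2Weight τ hmn
    linarith [ih (by omega)]

lemma sum_Ico_bdf2Weight_le {a : ℕ} (han : a ≤ n) (hτ : ∀ j ∈ Ioc a n, 0 ≤ τ j) :
    ∑ k ∈ Ico a n, bdf2Weight τ n k ≤ ∑ k ∈ Ioc a n, τ k := by
  linarith [sum_Ico_bdf2Weight_add τ han le_rfl, bdf2Weight_self τ (n := n),
    bdf2Weight_nonneg τ hτ]

end bdf2Weight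

lemma abs_add_mul_abs_dtau_succ_le {r τ w : ℕ → ℝ} {k : ℕ} {c c' : ℝ} (hk : 1 ≤ k)
    (hτ : 0 < τ (k + 1)) (hr : 0 < r (k + 1)) (hc' : 0 ≤ c') (hcc' : τ (k + 1) + c' = 2 * c) :
    |w (k + 1)| + c' * |dtau τ w (k + 1)| ≤
      |w k| + c * |dtau τ w k| + 2 * c * |D2 r τ w (k + 1)| := by
  have hw := abs_le_abs_add_mul_abs_dtau (v := w) hτ
  have hdtau := abs_dtau_le_half_add_abs_D2 (τ := τ) (v := w) (by omega : 2 ≤ k + 1) hr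
  simp only [Nat.add_sub_cancel] at hw hdtau
  have hsplit : τ (k + 1) * |dtau τ w (k + 1)| + c' * |dtau τ w (k + 1)| =
      2 * c * |dtau τ w (k + 1)| := by rw [← add_mul, hcc']
  have := mul_le_mul_of_nonneg_left hdtau (by linarith : 0 ≤ 2 * c)
  linarith

lemma abs_add_mul_abs_dtau_succ_le_mul_exp {r τ w : ℕ → ℝ} {k : ℕ} {L E c c' : ℝ} (hk : 1 ≤ k)
    (hτ : 0 < τ (k + 1)) (hr : 0 < r (k + 1)) (hc' : 0 ≤ c') (hcc' : τ (k + 1) + c' = 2 * c)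
    (hL : 0 ≤ L) (hLc : 4 * L * c ≤ 1) (hE : 0 ≤ E)
    (hD : |D2 r τ w (k + 1)| ≤ L * |w (k + 1)| + E) :
    |w (k + 1)| + c' * |dtau τ w (k + 1)| ≤
      (|w k| + c * |dtau τ w k| + 2 * c * E) * exp (2 * log 2 * (2 * L * c)) := by
  have hc : 0 ≤ c := by linarith
  have henergy := abs_add_mul_abs_dtau_succ_le (w := w) hk hτ hr hc' hcc'
  have hDc := mul_le_mul_of_nonneg_left hD (by linarith : 0 ≤ 2 * c)
  have hLc0 : 0 ≤ 2 * L * c := by positivity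
  refine le_mul_exp_of_one_sub_mul_le hLc0 (by linarith) (by positivity) ?_
  nlinarith [mul_nonneg hLc0 (mul_nonneg hc' (abs_nonneg (dtau τ w (k + 1))))]

lemma exp_two_mul_log_two_mul_sum_Ioc_le {τ : ℕ → ℝ} {L : ℝ} {n : ℕ} (hn : 2 ≤ n) (hL : 0 ≤ L)
    (hτ : ∀ k ∈ Icc 1 n, 0 ≤ τ k) (hLτ : 4 * L * τ n ≤ 1) :
    exp (2 * log 2 * (2 * L * ∑ k ∈ Ioc 1 n, τ k)) ≤ 2 * exp (4 * L * ∑ k ∈ Icc 1 (n - 1), τ k) := by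
  obtain ⟨m, rfl⟩ : ∃ m, n = m + 1 := ⟨n - 1, by omega⟩
  rw [sum_Ioc_succ_top (by omega), Nat.add_sub_cancel]
  have hsub : ∑ k ∈ Ioc 1 m, τ k ≤ ∑ k ∈ Icc 1 m, τ k :=
    sum_le_sum_of_subset_of_nonneg Ioc_subset_Icc_self fun k hk _ => hτ k (by grind)
  have hpos : 0 ≤ ∑ k ∈ Ioc 1 m, τ k := sum_nonneg fun k hk => hτ k (by grind)
  have hlog : log 2 ≤ 1 := by linarith [log_le_sub_one_of_pos two_pos]
  have hlog0 : 0 < log 2 := log_pos one_lt_two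
  have h1 := mul_le_mul_of_nonneg_left hLτ hlog0.le
  have h2 := mul_le_mul hlog (mul_le_mul_of_nonneg_left hsub hL) (mul_nonneg hL hpos) zero_le_one
  rw [← exp_log two_pos, ← exp_add, exp_log two_pos]
  exact exp_le_exp.2 (by nlinarith)

theorem abs_le_of_abs_D2_le {r τ w : ℕ → ℝ} {L τm E : ℝ} {n : ℕ} (hn : 2 ≤ n)
    (hτ : ∀ k ∈ Icc 1 n, 0 < τ k ∧ τ k ≤ τm) (hr : ∀ k ∈ Icc 2 n, 0 < r k)
    (hL : 0 ≤ L) (hLτ : 4 * L * τm ≤ 1) (hE : 0 ≤ E)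
    (hD : ∀ k ∈ Icc 2 n, |D2 r τ w k| ≤ L * |w k| + E) :
    |w n| ≤ 4 * exp (4 * L * ∑ j ∈ Icc 1 (n - 1), τ j) *
      (|w 1| + τm * |dtau τ w 1| + (∑ j ∈ Icc 1 n, τ j) * E) := by
  set c := bdf2Weight τ n
  set Φ : ℕ → ℝ := fun k => |w k| + c k * |dtau τ w k|
  obtain ⟨hτ1, hτ1m⟩ := hτ 1 (by simp; omega)
  have hτm : 0 ≤ τm := hτ1.le.trans hτ1m
  have hc : ∀ k ∈ Icc 1 n, 0 ≤ c k ∧ c k ≤ τm := fun k hk =>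
    ⟨bdf2Weight_nonneg τ fun j hj => (hτ j (by grind)).1.le,
      bdf2Weight_le τ hτm (by grind) fun j hj => (hτ j (by grind)).2⟩
  have hstep : ∀ k ∈ Ico 1 n,
      Φ (k + 1) ≤ (Φ k + 2 * c k * E) * exp (2 * log 2 * (2 * L * c k)) := fun k hk =>
    abs_add_mul_abs_dtau_succ_le_mul_exp (by grind) (hτ (k + 1) (by grind)).1
      (hr (k + 1) (by grind)) (hc (k + 1) (by grind)).1 (two_mul_bdf2Weight τ (by grind)).symm hL
      (by nlinarith [hc k (by grind)]) hE (hD (k + 1) (by grind))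
  have hgronwall := le_mul_exp_sum_of_le_add_mul_exp (m := 1) (b := fun k => 2 * c k * E)
    (G := fun k => 2 * log 2 * (2 * L * c k)) (by omega)
    (fun k hk => mul_nonneg (mul_nonneg two_pos.le (hc k (by grind)).1) hE)
    (fun k hk => mul_nonneg (mul_nonneg two_pos.le (log_pos one_lt_two).le)
      (mul_nonneg (mul_nonneg two_pos.le hL) (hc k (by grind)).1)) hstep
  have hsum : ∑ k ∈ Ico 1 n, c k ≤ ∑ k ∈ Ioc 1 n, τ k :=
    sum_Ico_bdf2Weight_le τ (by omega) fun j hj => (hτ j (by grind)).1.le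
  have hT : ∑ k ∈ Ioc 1 n, τ k ≤ ∑ j ∈ Icc 1 n, τ j :=
    sum_le_sum_of_subset_of_nonneg Ioc_subset_Icc_self fun k hk _ => (hτ k hk).1.le
  have hΦn : Φ n = |w n| := by simp [Φ, c]
  have hΦ1 : Φ 1 ≤ |w 1| + τm * |dtau τ w 1| := by
    simp only [Φ]
    gcongr
    exact (hc 1 (by simp; omega)).2
  have hforcing : ∑ k ∈ Ico 1 n, 2 * c k * E ≤ 2 * ((∑ j ∈ Icc 1 n, τ j) * E) := by
    rw [← sum_mul, ← mul_sum]
    nlinarith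
  have hgrowth : exp (∑ k ∈ Ico 1 n, 2 * log 2 * (2 * L * c k)) ≤
      2 * exp (4 * L * ∑ j ∈ Icc 1 (n - 1), τ j) := by
    rw [← mul_sum, ← mul_sum]
    refine (exp_le_exp.2 ?_).trans (exp_two_mul_log_two_mul_sum_Ioc_le hn hL
      (fun k hk => (hτ k hk).1.le) (by nlinarith [(hτ n (by simp; omega)).2]))
    gcongr
  have hX : 0 ≤ |w 1| + τm * |dtau τ w 1| := by positivity
  calc |w n| = Φ n := hΦn.symm
    _ ≤ _ := hgronwall
    _ ≤ (|w 1| + τm * |dtau τ w 1| + 2 * ((∑ j ∈ Icc 1 n, τ j) * E)) *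
        (2 * exp (4 * L * ∑ j ∈ Icc 1 (n - 1), τ j)) := by
      gcongr
      have := mul_nonneg (sum_nonneg fun k hk => (hτ k hk).1.le) hE
      linarith
    _ ≤ _ := by nlinarith [exp_pos (4 * L * ∑ j ∈ Icc 1 (n - 1), τ j)]

/-- mesh-robust stability of the variable-step BDF2 scheme. -/
theorem stmt_10 (N : ℕ) (f : ℝ → ℝ) (Lf : ℝ) (hLf : 0 < Lf)
    (hLip : ∀ a b : ℝ, |f a - f b| ≤ Lf * |a - b|)
    (τ : ℕ → ℝ) (τm : ℝ) (r : ℕ → ℝ)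
    (hτ : ∀ k, 1 ≤ k → k ≤ N → 0 < τ k ∧ τ k ≤ τm)
    (hr : ∀ k, 2 ≤ k → r k = τ k / τ (k - 1))
    (hτm : τm ≤ 1 / (4 * Lf))
    (v vbar ε : ℕ → ℝ)
    (heq : ∀ n, 2 ≤ n → n ≤ N →
      D2 r τ (fun k => vbar k - v k) n = f (vbar n) - f (v n) + ε n) :
    ∀ n, ∀ h2 : 2 ≤ n, n ≤ N →
      |vbar n - v n| ≤
        4 * Real.exp (4 * Lf * ∑ j ∈ Finset.Icc 1 (n - 1), τ j) *
          (|vbar 1 - v 1| + τm * |dtau τ (fun k => vbar k - v k) 1| +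
            (∑ j ∈ Finset.Icc 1 n, τ j) *
              (Finset.Icc 2 n).sup' (Finset.nonempty_Icc.mpr h2) (fun i => |ε i|)) := by
  intro n h2 hnN
  have hτn : ∀ k ∈ Icc 1 n, 0 < τ k ∧ τ k ≤ τm := fun k hk => hτ k (by grind) (by grind)
  have hε : ∀ k ∈ Icc 2 n, |ε k| ≤ (Icc 2 n).sup' (nonempty_Icc.mpr h2) (fun i => |ε i|) :=
    fun k hk => le_sup' (fun i => |ε i|) hk
  refine abs_le_of_abs_D2_le (r := r) (w := fun k => vbar k - v k) h2 hτn (fun k hk => ?_)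
    hLf.le ?_ ((abs_nonneg _).trans (hε 2 (by simp [h2]))) (fun k hk => ?_)
  · rw [hr k (by grind)]
    exact div_pos (hτn k (by grind)).1 (hτn (k - 1) (by grind)).1
  · rwa [le_div_iff₀ (by positivity), mul_comm] at hτm
  · rw [heq k (by grind) (by grind)]
    exact (abs_add_le _ _).trans (add_le_add (hLip _ _) (hε k hk))
end
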